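/- Let H_{R_1}, H_{R_2}, H_{R_3} be finite-dimensional complex Hilbert spaces and let {R^r}_{r=0}^{7} be positive semidefinite operators on H_{R_1}⊗H_{R_2}⊗H_{R_3} with Σ_{r=0}^{7} R^r = I. For i = 1, 2, 3 let σ_i be a density operator on ℂ²⊗H_{R_i}. Suppose that for every r ∈ {0,…,7}: 8·Tr_{R_1R_2R_3}[ (I_{(ℂ²)^{⊗3}} ⊗ R^r)(σ_1⊗σ_2⊗σ_3) ] = |GHZ^r⟩⟨GHZ^r|, where the tensor factors are reordered so that the three ℂ² factors come first and Tr_{R_1R_2R_3} is the partial trace over H_{R_1}⊗H_{R_2}⊗H_{R_3}. Then 2·Tr_{R_1}σ_1 = I_2, 2·Tr_{R_2}σ_2 = I_2, and 2·Tr_{R_3}σ_3 = I_2; in particular the Choi–Jamiołkowski maps associated with the operators 2σ_i are unital. -/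

import Mathlib

/-!
Summing the hypothesis over `r`, the condition `∑ R^r = I` collapses the left-hand side to
`8 · ⨂ᵢ Tr_{R_i} σ_i`, while the right-hand side becomes `I` because the GHZ states form an
orthonormal basis: for an odd number of qubits the sign `(-1)^{Σ kᵢ}` flips under `k ↦ k̄`, which
makes `|GHZ_k⟩` and `|GHZ_{k̄}⟩` orthogonal. If a tensor product of trace-one matrices is a scalar
multiple of the identity, tracing out all factors but one shows that each factor is a scalar
multiple of the identity, here `I₂ / 2`.
-/

open scoped BigOperators ComplexOrder
open Matrix

noncomputable section

/-- The binary digits `k_1 … k_N` of `r` (most significant first). -/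
def bits (N r : ℕ) : Fin N → Fin 2 :=
  fun i => ⟨r / 2 ^ (N - 1 - (i : ℕ)) % 2, Nat.mod_lt _ (by norm_num)⟩

/-- The tilted GHZ state with digit string `k`; at `θ = π/4` this is
`((-1)^{k_1+k_2+k_3}|k⟩ + |k̄⟩)/√2`. -/
def ghzVec (N : ℕ) (θ : ℝ) (k : Fin N → Fin 2) : (Fin N → Fin 2) → ℂ :=
  fun x =>
    (if x = k then ((-1 : ℂ) ^ (∑ i, (k i).val)) * (Real.cos θ : ℂ) else 0) +
    (if x = (fun i => 1 - k i) then (Real.sin θ : ℂ) else 0)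

/-- The tensor product `σ_1 ⊗ σ_2 ⊗ σ_3` of the three bipartite states, with tensor
factors reordered so that the three `ℂ²` factors come first. -/
def bigSigma {e : Fin 3 → ℕ}
    (σ : (i : Fin 3) → Matrix (Fin 2 × Fin (e i)) (Fin 2 × Fin (e i)) ℂ) :
    Matrix ((Fin 3 → Fin 2) × ((i : Fin 3) → Fin (e i)))
      ((Fin 3 → Fin 2) × ((i : Fin 3) → Fin (e i))) ℂ :=
  fun p q => ∏ i, σ i (p.1 i, p.2 i) (q.1 i, q.2 i)

/-- `I ⊗ R` acting on `(ℂ²)^{⊗3} ⊗ (H_{R_1}⊗H_{R_2}⊗H_{R_3})`. -/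
def idKronR {e : Fin 3 → ℕ}
    (R : Matrix ((i : Fin 3) → Fin (e i)) ((i : Fin 3) → Fin (e i)) ℂ) :
    Matrix ((Fin 3 → Fin 2) × ((i : Fin 3) → Fin (e i)))
      ((Fin 3 → Fin 2) × ((i : Fin 3) → Fin (e i))) ℂ :=
  fun p q => (if p.1 = q.1 then (1 : ℂ) else 0) * R p.2 q.2

section GHZ

variable {N : ℕ}

lemma eq_one_sub_comm {x k : Fin N → Fin 2} :
    x = (fun i => 1 - k i) ↔ k = (fun i => 1 - x i) := by
  constructor <;> rintro rfl <;> simp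

lemma one_sub_inj {x y : Fin N → Fin 2} : (fun i => 1 - x i) = (fun i => 1 - y i) ↔ x = y := by
  simp [funext_iff]

lemma ne_one_sub (hN : 0 < N) (k : Fin N → Fin 2) : k ≠ fun i => 1 - k i := by
  have hFin2 : ∀ a : Fin 2, a ≠ 1 - a := by decide
  exact fun hk => hFin2 _ (congrFun hk ⟨0, hN⟩)

lemma neg_one_pow_sum_one_sub (hN : Odd N) (k : Fin N → Fin 2) :
    (-1 : ℂ) ^ (∑ i, (1 - k i).val) = -(-1) ^ (∑ i, (k i).val) := by
  set a := ∑ i, (k i).val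
  have hsum : a + ∑ i, (1 - k i).val = N := by
    have h : ∀ b : Fin 2, b.val + (1 - b).val = 1 := by decide
    simp [a, ← Finset.sum_add_distrib, h]
  calc (-1 : ℂ) ^ (∑ i, (1 - k i).val)
      = (-1) ^ (a + ∑ i, (1 - k i).val) * (-1) ^ a := by
        rw [pow_add, mul_right_comm, ← pow_add, Even.neg_one_pow ⟨a, rfl⟩, one_mul]
    _ = -(-1) ^ a := by rw [hsum, hN.neg_one_pow, neg_one_mul]

lemma star_ghzVec (θ : ℝ) (k : Fin N → Fin 2) : star (ghzVec N θ k) = ghzVec N θ k := by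
  ext x
  simp only [Pi.star_apply, ghzVec, star_add, apply_ite star, star_mul', star_pow, star_neg,
    star_one, star_zero, Complex.star_def, Complex.conj_ofReal]

lemma sum_vecMulVec_ghzVec (hN : Odd N) (θ : ℝ) :
    ∑ k, vecMulVec (ghzVec N θ k) (star (ghzVec N θ k)) = 1 := by
  ext x y
  simp only [star_ghzVec, Matrix.sum_apply, vecMulVec_apply, ghzVec, add_mul, mul_add, ite_mul,
    mul_ite, zero_mul, mul_zero, Finset.sum_add_distrib]
  simp only [eq_one_sub_comm (x := x), eq_one_sub_comm (x := y), @eq_comm _ x, @eq_comm _ y]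
  simp only [Finset.sum_ite_eq', Finset.mem_univ, if_true, one_sub_inj, one_apply]
  by_cases hxy : y = x
  · subst hxy
    have hc : (Real.cos θ : ℂ) ^ 2 + (Real.sin θ : ℂ) ^ 2 = 1 := by
      exact_mod_cast Real.cos_sq_add_sin_sq θ
    have hs : ((-1 : ℂ) ^ ∑ i, (y i).val) ^ 2 = 1 := by
      rw [← pow_mul, mul_comm, pow_mul]; norm_num
    simp only [if_true, ne_one_sub hN.pos, (ne_one_sub hN.pos y).symm, if_false, add_zero]
    linear_combination (↑(Real.cos θ) ^ 2 : ℂ) * hs + hc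
  have hyx : (fun i => 1 - y i) = x ↔ y = fun i => 1 - x i := by rw [eq_comm, eq_one_sub_comm]
  simp only [hyx, if_neg hxy, if_neg (Ne.symm hxy), add_zero, zero_add]
  by_cases hy : y = fun i => 1 - x i
  · subst hy
    simp only [if_true, neg_one_pow_sum_one_sub hN, sub_sub_cancel]
    ring
  · simp only [if_neg hy, add_zero]

end GHZ

section PartialTrace

variable {m n α : Type*} [Fintype n] [AddCommMonoid α]

def partialTrace (M : Matrix (m × n) (m × n) α) : Matrix m m α :=
  fun x y => ∑ u, M (x, u) (y, u)

lemma partialTrace_sum {ι : Type*} (s : Finset ι) (M : ι → Matrix (m × n) (m × n) α) :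
    partialTrace (∑ r ∈ s, M r) = ∑ r ∈ s, partialTrace (M r) := by
  ext x y
  simp only [partialTrace, Matrix.sum_apply]
  exact Finset.sum_comm

lemma trace_partialTrace [Fintype m] (M : Matrix (m × n) (m × n) α) :
    (partialTrace M).trace = M.trace := by
  simp only [trace, Matrix.diag, partialTrace, Fintype.sum_prod_type]

end PartialTrace

def piKronecker {ι α : Type*} {m : ι → Type*} [Fintype ι] [CommMonoid α]
    (τ : (i : ι) → Matrix (m i) (m i) α) : Matrix ((i : ι) → m i) ((i : ι) → m i) α :=
  fun x y => ∏ i, τ i (x i) (y i)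

lemma smul_eq_of_smul_piKronecker_eq_one {ι m : Type*} [Fintype ι] [DecidableEq ι] [Fintype m]
    [DecidableEq m] (τ : ι → Matrix m m ℂ) (hτ : ∀ i, (τ i).trace = 1) (c : ℂ)
    (h : c • piKronecker τ = 1) (j : ι) :
    (c * Fintype.card m) • τ j = (Fintype.card (ι → m) : ℂ) • 1 := by
  ext x y
  set f : ι → m → ℂ := fun i a => τ i (if i = j then x else a) (if i = j then y else a)
  have hprod : ∏ i, ∑ a, f i a = Fintype.card m * τ j x y := by
    rw [Finset.prod_eq_single j (fun i _ hij => by simpa [f, hij, trace] using hτ i)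
      (by simp)]
    simp [f]
  have hslice (w : ι → m) :
      c * ∏ i, f i (w i) = if x = y then 1 else 0 := by
    have := congrFun (congrFun h (Function.update w j x)) (Function.update w j y)
    simpa [piKronecker, Function.update_apply, one_apply, f,
      (Function.update_injective w j).eq_iff] using this
  calc ((c * Fintype.card m) • τ j) x y = c * ∑ w : ι → m, ∏ i, f i (w i) := by
        rw [← Fintype.prod_sum, hprod, Matrix.smul_apply, smul_eq_mul, mul_assoc]
    _ = _ := by
        rw [Finset.mul_sum, Finset.sum_congr rfl fun w _ => hslice w]
        simp [one_apply]

lemma sum_idKronR {e : Fin 3 → ℕ} {ι : Type*} [Fintype ι]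
    (R : ι → Matrix ((i : Fin 3) → Fin (e i)) ((i : Fin 3) → Fin (e i)) ℂ) (hR : ∑ r, R r = 1) :
    ∑ r, idKronR (R r) = 1 := by
  ext p q
  simp only [Matrix.sum_apply, idKronR, ← Finset.mul_sum]
  rw [← Matrix.sum_apply, hR]
  simp only [one_apply, ite_zero_mul_ite_zero, mul_one, Prod.ext_iff]

lemma partialTrace_bigSigma {e : Fin 3 → ℕ}
    (σ : (i : Fin 3) → Matrix (Fin 2 × Fin (e i)) (Fin 2 × Fin (e i)) ℂ) :
    partialTrace (bigSigma σ) = piKronecker fun i => partialTrace (σ i) := by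
  ext x y
  exact (Fintype.prod_sum fun i a => σ i (x i, a) (y i, a)).symm

lemma sum_vecMulVec_ghzVec_bits (θ : ℝ) :
    ∑ r : Fin 8, vecMulVec (ghzVec 3 θ (bits 3 r)) (star (ghzVec 3 θ (bits 3 r))) = 1 := by
  have hbits : Function.Bijective (bits 3 ∘ Fin.val : Fin 8 → Fin 3 → Fin 2) := by
    rw [Fintype.bijective_iff_injective_and_card]
    exact ⟨by decide, by decide⟩
  rw [← sum_vecMulVec_ghzVec (by decide) θ]
  exact hbits.sum_comp fun k => vecMulVec (ghzVec 3 θ k) (star (ghzVec 3 θ k))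

theorem stmt_18_general (e : Fin 3 → ℕ)
    (R : Fin 8 → Matrix ((i : Fin 3) → Fin (e i)) ((i : Fin 3) → Fin (e i)) ℂ)
    (hRsum : ∑ r, R r = 1)
    (σ : (i : Fin 3) → Matrix (Fin 2 × Fin (e i)) (Fin 2 × Fin (e i)) ℂ)
    (hσtr : ∀ i, (σ i).trace = 1)
    (h : ∀ r : Fin 8,
      ((8 : ℂ) • fun x y => ∑ u, (idKronR (R r) * bigSigma σ) (x, u) (y, u)) =
        Matrix.vecMulVec (ghzVec 3 (Real.pi / 4) (bits 3 r))
          (star (ghzVec 3 (Real.pi / 4) (bits 3 r)))) :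
    ∀ i : Fin 3,
      ((2 : ℂ) • fun x y => ∑ u, σ i (x, u) (y, u)) = (1 : Matrix (Fin 2) (Fin 2) ℂ) := by
  have hkron : (8 : ℂ) • piKronecker (fun i => partialTrace (σ i)) = 1 := by
    calc (8 : ℂ) • piKronecker (fun i => partialTrace (σ i))
        = ∑ r, (8 : ℂ) • partialTrace (idKronR (R r) * bigSigma σ) := by
          rw [← Finset.smul_sum, ← partialTrace_sum, ← Finset.sum_mul, sum_idKronR R hRsum,
            one_mul, partialTrace_bigSigma]
      _ = 1 := (Finset.sum_congr rfl fun r _ => h r).trans (sum_vecMulVec_ghzVec_bits _)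
  intro i
  have hi := smul_eq_of_smul_piKronecker_eq_one _
    (fun i => (trace_partialTrace (σ i)).trans (hσtr i)) 8 hkron i
  have hcard : (Fintype.card (Fin 3 → Fin 2) : ℂ) = 8 := by simp
  rw [hcard, mul_smul, Fintype.card_fin, Nat.cast_ofNat] at hi
  exact smul_right_injective _ (by norm_num) hi

/-- if `8·Tr_{R_1R_2R_3}[(I⊗R^r)(σ_1⊗σ_2⊗σ_3)] = |GHZ^r⟩⟨GHZ^r|` for all
`r ∈ {0,…,7}`, then `2·Tr_{R_i} σ_i = I₂` for each `i`; in particular the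
Choi–Jamiołkowski maps associated with the operators `2σ_i` are unital. -/
theorem stmt_18 (e : Fin 3 → ℕ)
    (R : Fin 8 → Matrix ((i : Fin 3) → Fin (e i)) ((i : Fin 3) → Fin (e i)) ℂ)
    (hRpsd : ∀ r, (R r).PosSemidef) (hRsum : ∑ r, R r = 1)
    (σ : (i : Fin 3) → Matrix (Fin 2 × Fin (e i)) (Fin 2 × Fin (e i)) ℂ)
    (hσpsd : ∀ i, (σ i).PosSemidef) (hσtr : ∀ i, (σ i).trace = 1)
    (h : ∀ r : Fin 8,
      ((8 : ℂ) • fun x y => ∑ u, (idKronR (R r) * bigSigma σ) (x, u) (y, u)) =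
        Matrix.vecMulVec (ghzVec 3 (Real.pi / 4) (bits 3 r))
          (star (ghzVec 3 (Real.pi / 4) (bits 3 r)))) :
    ∀ i : Fin 3,
      ((2 : ℂ) • fun x y => ∑ u, σ i (x, u) (y, u)) = (1 : Matrix (Fin 2) (Fin 2) ℂ) :=
  stmt_18_general e R hRsum σ hσtr h

end
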